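/- arXiv:cs/0703059 — 7 statements merged into one kernel-verified Lean document; each statement's English description precedes it below -/
import Mathlib

section
/- The rank of the 2×2 matrix multiplication map over ℂ is at most 7; that is, there exist linear functionals α_1,…,α_7 on Matrix(2×2,ℂ), linear functionals β_1,…,β_7 on Matrix(2×2,ℂ), and matrices c_1,…,c_7 ∈ Matrix(2×2,ℂ) such that for all A, B ∈ Matrix(2×2,ℂ), A·B = Σ_{i=1}^{7} α_i(A) β_i(B) c_i. -/
open scoped BigOperators

/-- A bilinear map `f : A × B → C` over `ℂ` has rank at most `r` if it admits a bilinear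
computation of length `r`. -/
def HasRankLE {A B C : Type*} [AddCommGroup A] [Module ℂ A] [AddCommGroup B] [Module ℂ B]
    [AddCommGroup C] [Module ℂ C] (f : A → B → C) (r : ℕ) : Prop :=
  ∃ (α : Fin r → (A →ₗ[ℂ] ℂ)) (β : Fin r → (B →ₗ[ℂ] ℂ)) (c : Fin r → C),
    ∀ a b, f a b = ∑ i, (α i a * β i b) • c i

/-!
Strassen's algorithm: the seven products
`(a₀₀ + a₁₁)(b₀₀ + b₁₁)`, `(a₁₀ + a₁₁) b₀₀`, `a₀₀ (b₀₁ - b₁₁)`, `a₁₁ (b₁₀ - b₀₀)`,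
`(a₀₀ + a₀₁) b₁₁`, `(a₁₀ - a₀₀)(b₀₀ + b₀₁)`, `(a₀₁ - a₁₁)(b₁₀ + b₁₁)`
span the four entries of `A * B`; `strassenOut k` records the signs with which the `k`-th product
enters each entry. These identities never commute two factors, so they hold over every ring, which
is what lets the algorithm recurse on blocks.
-/

namespace Matrix

variable (R : Type*) [Ring R]

local notation "e" => entryLinearMap R R

def strassenLeft : Fin 7 → Matrix (Fin 2) (Fin 2) R →ₗ[R] R :=
  ![e 0 0 + e 1 1, e 1 0 + e 1 1, e 0 0, e 1 1, e 0 0 + e 0 1, e 1 0 - e 0 0, e 0 1 - e 1 1]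

def strassenRight : Fin 7 → Matrix (Fin 2) (Fin 2) R →ₗ[R] R :=
  ![e 0 0 + e 1 1, e 0 0, e 0 1 - e 1 1, e 1 0 - e 0 0, e 1 1, e 0 0 + e 0 1, e 1 0 + e 1 1]

def strassenOut : Fin 7 → Matrix (Fin 2) (Fin 2) R :=
  ![!![1, 0; 0, 1], !![0, 0; 1, -1], !![0, 1; 0, 1], !![1, 0; 1, 0], !![-1, 1; 0, 0],
    !![0, 0; 0, 1], !![1, 0; 0, 0]]

theorem mul_eq_sum_strassen (A B : Matrix (Fin 2) (Fin 2) R) :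
    A * B = ∑ k, (strassenLeft R k A * strassenRight R k B) • strassenOut R k := by
  ext i j
  fin_cases i <;> fin_cases j <;>
    simp [strassenLeft, strassenRight, strassenOut, mul_apply, Fin.sum_univ_succ] <;> noncomm_ring

end Matrix

/-- Strassen: the rank of 2×2 matrix multiplication over ℂ is at most 7. -/
theorem rank_matMul_two_le_seven :
    HasRankLE (fun (A B : Matrix (Fin 2) (Fin 2) ℂ) => A * B) 7 :=
  ⟨Matrix.strassenLeft ℂ, Matrix.strassenRight ℂ, Matrix.strassenOut ℂ,
    Matrix.mul_eq_sum_strassen ℂ⟩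
end

section
/- (Strassen's equations) Let 3 ≤ a ≤ b ≤ r, and let T ∈ ℂ^a ⊗ ℂ^b ⊗ ℂ^b be a tensor of border rank at most r, i.e., T lies in the closure of the set of tensors of rank at most r. For α in the dual of ℂ^a, let T_α ∈ ℂ^b ⊗ ℂ^b denote the contraction of T by α, regarded as a b×b complex matrix. Suppose α is such that T_α is invertible. Then for all α¹, α² in the dual of ℂ^a, the matrix commutator [T_{α¹}·T_α^{-1}, T_{α²}·T_α^{-1}] = T_{α¹}T_α^{-1}T_{α²}T_α^{-1} − T_{α²}T_α^{-1}T_{α¹}T_α^{-1} has matrix rank at most 2(r − b). -/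
open scoped BigOperators

/-- A tensor `T ∈ ℂ^a ⊗ ℂ^b ⊗ ℂ^c`, given by its coordinates, has rank at most `r`
if it is a sum of `r` decomposable tensors. -/
def TRankLE {a b c : ℕ} (T : Fin a → Fin b → Fin c → ℂ) (r : ℕ) : Prop :=
  ∃ (u : Fin r → Fin a → ℂ) (v : Fin r → Fin b → ℂ) (w : Fin r → Fin c → ℂ),
    ∀ x y z, T x y z = ∑ i, u i x * v i y * w i z

/-- A tensor has border rank at most `r` if it lies in the closure of the set of
tensors of rank at most `r`. -/
def TBorderRankLE {a b c : ℕ} (T : Fin a → Fin b → Fin c → ℂ) (r : ℕ) : Prop :=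
  T ∈ closure {S : Fin a → Fin b → Fin c → ℂ | TRankLE S r}

/-- The contraction `T_α ∈ ℂ^b ⊗ ℂ^b` of `T ∈ ℂ^a ⊗ ℂ^b ⊗ ℂ^b` by a functional `α`
on `ℂ^a` (given by coordinates), regarded as a `b×b` matrix. -/
noncomputable def contr {a b : ℕ} (T : Fin a → Fin b → Fin b → ℂ) (α : Fin a → ℂ) :
    Matrix (Fin b) (Fin b) ℂ :=
  fun j k => ∑ i, α i * T i j k

/-!
The condition `IsUnit T_α → rank ⁅T_{α₁} T_α⁻¹, T_{α₂} T_α⁻¹⁆ ≤ 2 (r - b)` is closed in `T`: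
matrix inversion is continuous on the units and the rank is lower semicontinuous. So it suffices
to check it for `T = ∑ uᵢ ⊗ vᵢ ⊗ wᵢ` with `r` terms, and, perturbing the `uᵢ`, only for
decompositions with `α(uᵢ) ≠ 0` for all `i`. Then `T_β = A D_β W` with `D_β = diag (β(uᵢ))`, and
with `N = W T_α⁻¹` the commutator is `A (D₁ P D₂ - D₂ P D₁) N` where `P = N A` and `A D N = 1`.
As `D` is invertible and commutes with `D₁, D₂`, this is
`A (D₂ D⁻¹ (1 - D P) D₁ - D₁ D⁻¹ (1 - D P) D₂) N`, and `1 - D N A` is the idempotent complementary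
to `D N A`, whose rank is at least `b`; so `rank (1 - D P) ≤ r - b`.
-/

theorem Commute.mul_mul_sub_mul_mul_eq {R : Type*} [Ring R] {u : Rˣ} {d₁ d₂ : R}
    (h₁ : Commute (u : R) d₁) (h₂ : Commute (u : R) d₂) (h₁₂ : Commute d₁ d₂) (p : R) :
    d₁ * p * d₂ - d₂ * p * d₁ = d₂ * ↑u⁻¹ * (1 - u * p) * d₁ - d₁ * ↑u⁻¹ * (1 - u * p) * d₂ := by
  have hswap : d₂ * ↑u⁻¹ * d₁ = d₁ * ↑u⁻¹ * d₂ := by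
    rw [← h₂.units_inv_left.eq, mul_assoc, ← h₁₂.eq, ← mul_assoc, h₁.units_inv_left.eq]
  simp only [mul_sub, sub_mul, mul_one, mul_assoc, Units.inv_mul_cancel_left]
  simp only [← mul_assoc, hswap]
  abel

namespace Matrix

variable {l m n o : Type*} [Fintype m] [Fintype n] [Fintype o]

section Field

variable {K : Type*} [Field K]

omit [Fintype m] in
theorem rank_sub_le (A B : Matrix m n K) : (A - B).rank ≤ A.rank + B.rank := by
  have h : (A - B).mulVecLin = A.mulVecLin + -B.mulVecLin := by
    rw [sub_eq_add_neg, mulVecLin_add]; ext; simp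
  rw [rank, rank, rank, h, ← LinearMap.range_neg B.mulVecLin]
  exact (Submodule.finrank_mono (LinearMap.range_add_le _ _)).trans
    (Submodule.finrank_add_le_finrank_add_finrank _ _)

theorem rank_mul_mul_le (A : Matrix l m K) (M : Matrix m n K) (B : Matrix n o K) :
    (A * M * B).rank ≤ M.rank :=
  (rank_mul_le_left _ _).trans (rank_mul_le_right _ _)

theorem rank_mul_mul_sub_mul_mul_le (A A' : Matrix l m K) (M : Matrix m n K)
    (B B' : Matrix n o K) : (A * M * B - A' * M * B').rank ≤ 2 * M.rank :=
  (rank_sub_le _ _).trans <| by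
    rw [two_mul]
    exact add_le_add (rank_mul_mul_le _ _ _) (rank_mul_mul_le _ _ _)

theorem rank_one_sub_mul_le_of_mul_eq_one [DecidableEq m] [DecidableEq n]
    {A : Matrix m n K} {B : Matrix n m K} (h : A * B = 1) :
    (1 - B * A).rank ≤ Fintype.card n - Fintype.card m := by
  have hidem : B * A * (1 - B * A) = 0 := by
    rw [Matrix.mul_sub, Matrix.mul_one, Matrix.mul_assoc, ← Matrix.mul_assoc A, h,
      Matrix.one_mul, sub_self]
  have hsum := rank_add_rank_le_card_of_mul_eq_zero hidem
  have hle : Fintype.card m ≤ (B * A).rank :=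
    calc Fintype.card m = (A * (B * A) * B).rank := by
          rw [← Matrix.mul_assoc, h, Matrix.one_mul, h, rank_one]
      _ ≤ (B * A).rank := rank_mul_mul_le _ _ _
  omega

theorem rank_lie_mul_diagonal_mul_le [DecidableEq m] [DecidableEq n] {A : Matrix m n K}
    {N : Matrix n m K} {d : n → K} (hd : ∀ i, d i ≠ 0) (h : A * diagonal d * N = 1)
    (d₁ d₂ : n → K) :
    ⁅A * diagonal d₁ * N, A * diagonal d₂ * N⁆.rank ≤ 2 * (Fintype.card n - Fintype.card m) := by
  obtain ⟨D, hD⟩ : IsUnit (diagonal d) :=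
    isUnit_diagonal.mpr (Pi.isUnit_iff.mpr fun i => (hd i).isUnit)
  have hlie : ⁅A * diagonal d₁ * N, A * diagonal d₂ * N⁆ =
      A * (diagonal d₁ * (N * A) * diagonal d₂ - diagonal d₂ * (N * A) * diagonal d₁) * N := by
    simp only [Ring.lie_def, Matrix.mul_sub, Matrix.sub_mul, Matrix.mul_assoc]
  have hcomm : ∀ d', Commute (D : Matrix n n K) (diagonal d') :=
    fun d' => hD ▸ commute_diagonal d d'
  rw [hlie, Commute.mul_mul_sub_mul_mul_eq (hcomm d₁) (hcomm d₂) (commute_diagonal d₁ d₂)]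
  calc _ ≤ _ := rank_mul_mul_le _ _ _
    _ ≤ 2 * (1 - (D : Matrix n n K) * (N * A)).rank := rank_mul_mul_sub_mul_mul_le _ _ _ _ _
    _ ≤ _ := by
      rw [← Matrix.mul_assoc]
      gcongr
      exact rank_one_sub_mul_le_of_mul_eq_one (by rw [← Matrix.mul_assoc, hD, h])

end Field

theorem isClosed_setOf_rank_le {𝕜 : Type*} [DecidableEq n] [NontriviallyNormedField 𝕜]
    [CompleteSpace 𝕜] (k : ℕ) : IsClosed {M : Matrix m n 𝕜 | M.rank ≤ k} := by
  let φ : Matrix m n 𝕜 →ₗ[𝕜] (n → 𝕜) →L[𝕜] (m → 𝕜) :=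
    LinearMap.toContinuousLinearMap.toLinearMap ∘ₗ toLin'.toLinearMap
  have hrank : ∀ M : Matrix m n 𝕜, ((φ M : (n → 𝕜) →ₗ[𝕜] m → 𝕜).rank) = M.rank := by
    intro M
    simp only [φ, rank, LinearMap.rank, Module.finrank_eq_rank]
    rfl
  have hopen := (isOpen_setOfPred_nat_le_rank (k + 1)).preimage φ.continuous_of_finiteDimensional
  convert hopen.isClosed_compl using 1
  ext M
  simp [hrank]

theorem continuousOn_inv {𝕜 : Type*} [DecidableEq n] [NontriviallyNormedField 𝕜] :
    ContinuousOn Inv.inv {M : Matrix n n 𝕜 | IsUnit M} :=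
  fun M hM => (continuousAt_matrix_inv M (by
    rw [Ring.inverse_eq_inv']
    exact continuousAt_inv₀ ((isUnit_iff_isUnit_det M).mp hM).ne_zero)).continuousWithinAt

end Matrix

theorem ContinuousOn.isClosed_setOf_mem_imp {X Y : Type*} [TopologicalSpace X]
    [TopologicalSpace Y] {f : X → Y} {U : Set X} {K : Set Y} (hf : ContinuousOn f U)
    (hU : IsOpen U) (hK : IsClosed K) : IsClosed {x | x ∈ U → f x ∈ K} := by
  convert (hf.isOpen_inter_preimage hU hK.isOpen_compl).isClosed_compl using 1
  ext x
  simp [imp_iff_not_or]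

open Matrix

theorem continuous_contr {a b : ℕ} (β : Fin a → ℂ) :
    Continuous fun S : Fin a → Fin b → Fin b → ℂ => contr S β := by
  unfold contr; fun_prop

theorem isOpen_setOf_isUnit_contr {a b : ℕ} (α : Fin a → ℂ) :
    IsOpen {S : Fin a → Fin b → Fin b → ℂ | IsUnit (contr S α)} := by
  simp only [isUnit_iff_isUnit_det, isUnit_iff_ne_zero]
  exact isOpen_ne_fun (continuous_contr α).matrix_det continuous_const

theorem isClosed_setOf_isUnit_contr_imp_rank_le {a b : ℕ} (α α₁ α₂ : Fin a → ℂ) (k : ℕ) :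
    IsClosed {S : Fin a → Fin b → Fin b → ℂ |
      IsUnit (contr S α) →
        ⁅contr S α₁ * (contr S α)⁻¹, contr S α₂ * (contr S α)⁻¹⁆.rank ≤ k} := by
  have hinv : ContinuousOn (fun S : Fin a → Fin b → Fin b → ℂ => (contr S α)⁻¹)
      {S | IsUnit (contr S α)} :=
    Matrix.continuousOn_inv.comp (continuous_contr α).continuousOn fun _ h => h
  have hquot : ∀ β, ContinuousOn
      (fun S : Fin a → Fin b → Fin b → ℂ => contr S β * (contr S α)⁻¹) {S | IsUnit (contr S α)} :=
    fun β => (continuous_contr β).continuousOn.mul hinv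
  simp only [Ring.lie_def]
  exact ((hquot α₁).mul (hquot α₂)).sub ((hquot α₂).mul (hquot α₁)) |>.isClosed_setOf_mem_imp
    (isOpen_setOf_isUnit_contr α) (isClosed_setOf_rank_le k)

def tensorOfFactors {r a b c : ℕ} (u : Fin r → Fin a → ℂ) (v : Fin r → Fin b → ℂ)
    (w : Fin r → Fin c → ℂ) : Fin a → Fin b → Fin c → ℂ :=
  fun x y z => ∑ i, u i x * v i y * w i z

theorem contr_tensorOfFactors {r a b : ℕ} (u : Fin r → Fin a → ℂ) (v w : Fin r → Fin b → ℂ)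
    (β : Fin a → ℂ) :
    contr (tensorOfFactors u v w) β = (of v)ᵀ * diagonal (fun i => β ⬝ᵥ u i) * of w := by
  ext j k
  simp only [contr, tensorOfFactors, mul_apply, transpose_apply, of_apply, diagonal_apply,
    mul_ite, mul_zero, Finset.sum_ite_eq', Finset.mem_univ, if_true, dotProduct,
    Finset.mul_sum, Finset.sum_mul]
  rw [Finset.sum_comm]
  refine Finset.sum_congr rfl fun i _ => Finset.sum_congr rfl fun x _ => by ring

theorem rank_lie_contr_tensorOfFactors_le {r a b : ℕ} (u : Fin r → Fin a → ℂ)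
    (v w : Fin r → Fin b → ℂ) {α : Fin a → ℂ} (hu : ∀ i, α ⬝ᵥ u i ≠ 0)
    (hα : IsUnit (contr (tensorOfFactors u v w) α)) (α₁ α₂ : Fin a → ℂ) :
    ⁅contr (tensorOfFactors u v w) α₁ * (contr (tensorOfFactors u v w) α)⁻¹,
      contr (tensorOfFactors u v w) α₂ * (contr (tensorOfFactors u v w) α)⁻¹⁆.rank
      ≤ 2 * (r - b) := by
  set X := (contr (tensorOfFactors u v w) α)⁻¹
  have hX : contr (tensorOfFactors u v w) α * X = 1 :=
    mul_nonsing_inv _ ((isUnit_iff_isUnit_det _).mp hα)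
  simp only [contr_tensorOfFactors, Matrix.mul_assoc _ (of w) X] at hX ⊢
  simpa using rank_lie_mul_diagonal_mul_le hu hX _ _

theorem mem_of_isClosed_of_forall_dotProduct_ne_zero {r a b c : ℕ}
    {C : Set (Fin a → Fin b → Fin c → ℂ)} (hC : IsClosed C) {α : Fin a → ℂ} (hα : α ≠ 0)
    (h : ∀ u v w, (∀ i, α ⬝ᵥ u i ≠ 0) → tensorOfFactors (r := r) u v w ∈ C)
    (u : Fin r → Fin a → ℂ) (v : Fin r → Fin b → ℂ) (w : Fin r → Fin c → ℂ) :
    tensorOfFactors u v w ∈ C := by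
  obtain ⟨x₀, hx₀⟩ := Function.ne_iff.mp hα
  set e : Fin a → ℂ := Pi.single x₀ (α x₀)⁻¹
  have he : α ⬝ᵥ e = 1 := by simpa [e] using mul_inv_cancel₀ hx₀
  set g : ℂ → Fin a → Fin b → Fin c → ℂ := fun t => tensorOfFactors (fun i => u i + t • e) v w
  have hg : Continuous g := by unfold g tensorOfFactors; fun_prop
  have hbad : (Set.range fun i => -(α ⬝ᵥ u i)).Finite := Set.finite_range _
  have hmaps : Set.MapsTo g (Set.range fun i => -(α ⬝ᵥ u i))ᶜ C := by
    intro t ht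
    refine h _ v w fun i hi => ht ⟨i, ?_⟩
    rw [dotProduct_add, dotProduct_smul, he, smul_eq_mul, mul_one] at hi
    linear_combination -hi
  have h0 : (0 : ℂ) ∈ closure (Set.range fun i => -(α ⬝ᵥ u i))ᶜ := by
    simp [(hbad.countable.dense_compl ℂ).closure_eq]
  simpa [g] using hmaps.closure_left hg hC h0

theorem strassen_equations_general {a b r : ℕ}
    (T : Fin a → Fin b → Fin b → ℂ) (hT : TBorderRankLE T r)
    (α : Fin a → ℂ) (hα : IsUnit (contr T α)) (α₁ α₂ : Fin a → ℂ) :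
    Matrix.rank
      (contr T α₁ * (contr T α)⁻¹ * (contr T α₂ * (contr T α)⁻¹) -
        contr T α₂ * (contr T α)⁻¹ * (contr T α₁ * (contr T α)⁻¹)) ≤ 2 * (r - b) := by
  rcases eq_or_ne α 0 with rfl | hα₀
  · have h0 : contr T 0 = 0 := by ext; simp [contr]
    have := subsingleton_of_zero_eq_one (isUnit_zero_iff.mp (h0 ▸ hα))
    simp [Subsingleton.elim _ (0 : Matrix (Fin b) (Fin b) ℂ)]
  rw [← Ring.lie_def]
  have hC := isClosed_setOf_isUnit_contr_imp_rank_le (b := b) α α₁ α₂ (2 * (r - b))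
  refine closure_minimal (fun S hS => ?_) hC hT hα
  obtain ⟨u, v, w, hS⟩ := hS
  obtain rfl : S = tensorOfFactors u v w := funext fun x => funext fun y => funext (hS x y)
  exact mem_of_isClosed_of_forall_dotProduct_ne_zero hC hα₀
    (fun u v w hu hunit => rank_lie_contr_tensorOfFactors_le u v w hu hunit α₁ α₂) u v w

/-- Strassen's equations: if `3 ≤ a ≤ b ≤ r`, `T ∈ ℂ^a ⊗ ℂ^b ⊗ ℂ^b` has border rank
at most `r`, and `α ∈ (ℂ^a)*` is such that `T_α` is invertible, then for all
`α¹, α² ∈ (ℂ^a)*` the commutator `[T_{α¹}T_α⁻¹, T_{α²}T_α⁻¹]` has rank at most `2(r−b)`. -/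
theorem strassen_equations {a b r : ℕ} (ha : 3 ≤ a) (hab : a ≤ b) (hbr : b ≤ r)
    (T : Fin a → Fin b → Fin b → ℂ) (hT : TBorderRankLE T r)
    (α : Fin a → ℂ) (hα : IsUnit (contr T α)) (α₁ α₂ : Fin a → ℂ) :
    Matrix.rank
      (contr T α₁ * (contr T α)⁻¹ * (contr T α₂ * (contr T α)⁻¹) -
        contr T α₂ * (contr T α)⁻¹ * (contr T α₁ * (contr T α)⁻¹)) ≤ 2 * (r - b) :=
  strassen_equations_general T hT α hα α₁ α₂
end

section
/- The closure of the set of tensors of rank at most 4 in ℂ³ ⊗ ℂ³ ⊗ ℂ³ is a proper subset of ℂ³ ⊗ ℂ³ ⊗ ℂ³; that is, there exists a tensor T ∈ ℂ³ ⊗ ℂ³ ⊗ ℂ³ whose border rank is at least 5. (Equivalently, σ_4(Seg(ℙ²×ℙ²×ℙ²)) ≠ ℙ(ℂ³⊗ℂ³⊗ℂ³).) -/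
open scoped BigOperators

/-!
Strassen's equation via a Koszul flattening. For `T ∈ A ⊗ B ⊗ C` with `A = ℂ³`, the flattening
`T_A^∧ : A ⊗ B* → Λ²A ⊗ C` sends a decomposable tensor `u ⊗ v ⊗ w` to `(u ∧ ·) ⊗ (w ⊗ v)`, of rank
`2`, so a tensor of rank at most `4` in `ℂ³ ⊗ ℂ³ ⊗ ℂ³` has a `9 × 9` flattening of rank at most `8`,
i.e. of determinant zero. This polynomial condition passes to the closure, while an explicit
tensor has an invertible flattening.
-/

open Matrix
open scoped Kronecker

section Rank

variable {ι m n p q K : Type*} [Field K] [Fintype n]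

theorem Matrix.rank_add_le (A B : Matrix m n K) : (A + B).rank ≤ A.rank + B.rank := by
  rw [Matrix.rank, Matrix.rank, Matrix.rank, Matrix.mulVecLin_add]
  have hle : LinearMap.range (A.mulVecLin + B.mulVecLin)
      ≤ LinearMap.range A.mulVecLin ⊔ LinearMap.range B.mulVecLin := by
    rintro _ ⟨v, rfl⟩
    exact Submodule.mem_sup.2 ⟨_, ⟨v, rfl⟩, _, ⟨v, rfl⟩, rfl⟩
  exact (Submodule.finrank_mono hle).trans (Submodule.finrank_add_le_finrank_add_finrank _ _)

theorem Matrix.rank_sum_le (s : Finset ι) (A : ι → Matrix m n K) :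
    (∑ i ∈ s, A i).rank ≤ ∑ i ∈ s, (A i).rank :=
  Finset.le_sum_of_subadditive (fun B : Matrix m n K => B.rank) rank_zero.le rank_add_le s A

theorem Matrix.rank_kronecker_vecMulVec_le [Fintype m] [Fintype q] [DecidableEq m] [DecidableEq n]
    (A : Matrix m n K) (w : p → K) (v : q → K) :
    (A ⊗ₖ vecMulVec w v).rank ≤ A.rank := by
  have hfactor : A ⊗ₖ vecMulVec w v
      = ((1 : Matrix m m K) ⊗ₖ replicateCol Unit w) * (A ⊗ₖ (1 : Matrix Unit Unit K))
        * ((1 : Matrix n n K) ⊗ₖ replicateRow Unit v) := by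
    rw [← mul_kronecker_mul, ← mul_kronecker_mul, Matrix.one_mul, Matrix.mul_one, Matrix.mul_one,
      vecMulVec_eq Unit]
  have hunit : A ⊗ₖ (1 : Matrix Unit Unit K) = A.submatrix Prod.fst Prod.fst := by
    ext; simp
  calc (A ⊗ₖ vecMulVec w v).rank ≤ (A ⊗ₖ (1 : Matrix Unit Unit K)).rank := by
        rw [hfactor]
        exact (rank_mul_le_left _ _).trans (rank_mul_le_right _ _)
    _ = A.rank := by
        rw [hunit]
        exact rank_submatrix A (Equiv.prodPUnit m) (Equiv.prodPUnit n)

end Rank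

section CrossMatrix

variable {K : Type*} [CommRing K]

def crossMatrix : (Fin 3 → K) →ₗ[K] Matrix (Fin 3) (Fin 3) K :=
  LinearMap.toMatrix'.toLinearMap ∘ₗ crossProduct

theorem crossMatrix_mulVec (u v : Fin 3 → K) : crossMatrix u *ᵥ v = u ⨯₃ v :=
  LinearMap.toMatrix'_mulVec _ _

theorem crossMatrix_eq (u : Fin 3 → K) :
    crossMatrix u = !![0, -u 2, u 1; u 2, 0, -u 0; -u 1, u 0, 0] := by
  ext i j
  fin_cases i <;> fin_cases j <;> simp [crossMatrix, LinearMap.toMatrix'_apply, cross_apply]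

theorem rank_crossMatrix_le {F : Type*} [Field F] (u : Fin 3 → F) :
    (crossMatrix u).rank ≤ 2 := by
  rcases eq_or_ne u 0 with rfl | hu
  · simp
  have hker : 0 < Module.finrank F (LinearMap.ker (crossMatrix u).mulVecLin) :=
    Module.finrank_pos_iff_exists_ne_zero.2
      ⟨⟨u, by simp [crossMatrix_mulVec]⟩, by simpa using hu⟩
  have hnullity := LinearMap.finrank_range_add_finrank_ker (crossMatrix u).mulVecLin
  rw [Module.finrank_fin_fun] at hnullity
  unfold rank
  omega

end CrossMatrix

section KoszulFlattening

variable {K β γ : Type*} [CommRing K]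

/-- With `Λ²K³` identified with `K³` through the cross product, this is the Koszul flattening
`A ⊗ B* → Λ²A ⊗ C`, `a ⊗ β ↦ ∑ⱼ (aⱼ ∧ a) ⊗ T(aⱼ*, β, ·)`. -/
def koszulFlattening (T : Fin 3 → β → γ → K) : Matrix (Fin 3 × γ) (Fin 3 × β) K :=
  of fun p q => crossMatrix (fun j => T j q.2 p.2) p.1 q.1

theorem koszulFlattening_eq_sum_kronecker {ι : Type*} [Fintype ι]
    (u : ι → Fin 3 → K) (v : ι → β → K) (w : ι → γ → K) :
    koszulFlattening (fun x y z => ∑ i, u i x * v i y * w i z)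
      = ∑ i, crossMatrix (u i) ⊗ₖ vecMulVec (w i) (v i) := by
  ext ⟨k, z⟩ ⟨x, y⟩
  have hslice : (fun j => ∑ i, u i j * v i y * w i z) = ∑ i, (v i y * w i z) • u i := by
    ext j
    simp only [Finset.sum_apply, Pi.smul_apply, smul_eq_mul]
    exact Finset.sum_congr rfl fun i _ => by ring
  simp only [koszulFlattening, of_apply, hslice, map_sum, map_smul, Matrix.sum_apply,
    Matrix.smul_apply, kronecker_apply, vecMulVec_apply, smul_eq_mul]
  exact Finset.sum_congr rfl fun i _ => by ring

theorem continuous_koszulFlattening [TopologicalSpace K] [IsTopologicalRing K] :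
    Continuous (koszulFlattening : (Fin 3 → β → γ → K) → Matrix (Fin 3 × γ) (Fin 3 × β) K) := by
  unfold koszulFlattening
  fun_prop

end KoszulFlattening

theorem TRankLE.rank_koszulFlattening_le {b c r : ℕ} {T : Fin 3 → Fin b → Fin c → ℂ}
    (hT : TRankLE T r) : (koszulFlattening T).rank ≤ 2 * r := by
  obtain ⟨u, v, w, hT⟩ := hT
  obtain rfl : T = fun x y z => ∑ i, u i x * v i y * w i z := funext₃ hT
  rw [koszulFlattening_eq_sum_kronecker]
  calc _ ≤ ∑ i, (crossMatrix (u i) ⊗ₖ vecMulVec (w i) (v i)).rank := rank_sum_le _ _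
    _ ≤ ∑ _ : Fin r, 2 := Finset.sum_le_sum fun i _ =>
        (rank_kronecker_vecMulVec_le _ _ _).trans (rank_crossMatrix_le _)
    _ = 2 * r := by simp [mul_comm]

theorem TRankLE.det_koszulFlattening_eq_zero {T : Fin 3 → Fin 3 → Fin 3 → ℂ} (hT : TRankLE T 4) :
    (koszulFlattening T).det = 0 := by
  by_contra hdet
  have hrank := hT.rank_koszulFlattening_le
  rw [rank_of_det_ne_zero hdet] at hrank
  simp at hrank

/-- Slices `1`, `X = E₀₁ + E₁₂`, `Y = E₀₁ + E₂₀` with `[X, Y] = E₁₀ - E₀₂ - E₂₁` invertible, so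
Strassen's bound `3 + rank [X, Y] / 2` on the border rank predicts `5`. -/
def strassenWitness : Fin 3 → Fin 3 → Fin 3 → ℂ :=
  ![![![1, 0, 0], ![0, 1, 0], ![0, 0, 1]],
    ![![0, 1, 0], ![0, 0, 1], ![0, 0, 0]],
    ![![0, 1, 0], ![0, 0, 0], ![1, 0, 0]]]

def strassenWitnessFlatteningInv : Matrix (Fin 3 × Fin 3) (Fin 3 × Fin 3) ℂ :=
  of fun q p => (![
    ![![![0, 0, 1], ![0, 1, 0], ![0, 0, 0]],
      ![![-1, 0, 0], ![0, 0, 0], ![0, 0, -1]],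
      ![![0, 1, 0], ![1, 0, 0], ![1, 0, 0]]],
    ![![![0, 0, 0], ![0, 0, 0], ![1, 0, 0]],
      ![![0, 0, 1], ![0, 1, 0], ![0, 1, 0]],
      ![![-1, 0, 0], ![0, 0, 0], ![0, 0, 0]]],
    ![![![0, 1, 0], ![0, 0, 0], ![1, 0, 0]],
      ![![0, 0, 1], ![0, 0, 0], ![0, 0, 0]],
      ![![0, 0, 0], ![0, 0, -1], ![0, 0, 0]]]] : Fin 3 → Fin 3 → Fin 3 → Fin 3 → ℂ)
    q.1 q.2 p.1 p.2

theorem koszulFlattening_strassenWitness_mul_inv :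
    koszulFlattening strassenWitness * strassenWitnessFlatteningInv = 1 := by
  ext ⟨k, z⟩ ⟨x, y⟩
  simp only [mul_apply, Fintype.sum_prod_type, Fin.sum_univ_three, koszulFlattening,
    strassenWitnessFlatteningInv, crossMatrix_eq, of_apply]
  fin_cases k <;> fin_cases z <;> fin_cases x <;> fin_cases y <;> simp [strassenWitness, one_apply]

/-- The closure of the set of tensors of rank at most 4 in `ℂ³ ⊗ ℂ³ ⊗ ℂ³` is a proper
subset: some tensor has border rank at least 5. -/
theorem sigma4_proper :
    ∃ T : Fin 3 → Fin 3 → Fin 3 → ℂ, ¬ TBorderRankLE T 4 := by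
  refine ⟨strassenWitness, fun hT => ?_⟩
  have hclosed : IsClosed {T : Fin 3 → Fin 3 → Fin 3 → ℂ | (koszulFlattening T).det = 0} :=
    isClosed_eq continuous_koszulFlattening.matrix_det continuous_const
  have hdet := closure_minimal (fun T hT => TRankLE.det_koszulFlattening_eq_zero hT) hclosed hT
  exact det_ne_zero_of_right_inverse koszulFlattening_strassenWitness_mul_inv hdet
end

section
/- For every m ≥ 1, the rank of the m×m matrix multiplication map over ℂ satisfies R(M_{m,m,m}) ≥ 2m² − m. -/
/-!
Write a bilinear computation as `f a b = ∑ᵢ αᵢ(a) βᵢ(b) cᵢ` and let `R ⊆ A` be a subspace on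
which `a ↦ f a ·` is injective, so that the `αᵢ` separate `R`. Choose `I` with the `αᵢ`, `i ∈ I`,
forming a basis of `R*`; then every `a` agrees with some `a' ∈ R` on all `αᵢ`, `i ∈ I`. If now
`βᵢ(b) = 0` for every `i ∉ I`, then `f a b = f a' b`, so `f(A, b) = f(R, b)`. When no nonzero `b`
has this property, the `βᵢ` with `i ∉ I` are jointly injective on `B`, whence
`r ≥ |I| + dim B = dim R + dim B`.

For `m × m` matrices take for `R` the matrices with vanishing first row, a right ideal of
dimension `m² - m`: then `A * Y ⊆ R` forces `Y = 0`, and the bound is `r ≥ 2m² - m`.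
-/

open scoped BigOperators

open Module

section SeparatingFamily

variable {K V ι : Type*} [Field K] [AddCommGroup V] [Module K V]

theorem LinearIndependent.pi_surjective [Finite ι] {φ : ι → Dual K V}
    (hφ : LinearIndependent K φ) : Function.Surjective (LinearMap.pi φ) := by
  have hfun : LinearIndependent K fun i => ⇑(φ i) :=
    hφ.map' (LinearMap.ltoFun K V K K) (LinearMap.ker_eq_bot.mpr DFunLike.coe_injective)
  rw [← span_flip_eq_top_iff_linearIndependent] at hfun
  rw [← LinearMap.range_eq_top, ← hfun, ← Submodule.span_eq (LinearMap.range _),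
    LinearMap.coe_range]
  rfl

theorem Module.Dual.exists_finset_pi_bijective [Finite ι] (φ : ι → Dual K V)
    (hφ : ∀ v, (∀ i, φ i v = 0) → v = 0) :
    ∃ I : Finset ι, Function.Bijective (LinearMap.pi fun i : I => φ i) := by
  obtain ⟨b, -, -, hspan, hli⟩ :=
    exists_linearIndepOn_extension (linearIndepOn_empty K φ) (Set.empty_subset Set.univ)
  have hb : b.Finite := Set.toFinite b
  refine ⟨hb.toFinset, ?_, ?_⟩
  · rw [← LinearMap.ker_eq_bot, Submodule.eq_bot_iff]
    intro v hv
    refine hφ v fun i => ?_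
    have hker : Submodule.span K (φ '' b) ≤ LinearMap.ker (Dual.eval K V v) := by
      rw [Submodule.span_le]
      rintro _ ⟨j, hj, rfl⟩
      exact congrFun (LinearMap.mem_ker.mp hv) ⟨j, hb.mem_toFinset.mpr hj⟩
    exact hker (hspan ⟨i, Set.mem_univ i, rfl⟩)
  · have hI : LinearIndepOn K φ (hb.toFinset : Set ι) := by rwa [hb.coe_toFinset]
    exact LinearIndependent.pi_surjective hI

end SeparatingFamily

section BilinearRank

variable {A B C : Type*} [AddCommGroup A] [Module ℂ A] [AddCommGroup B] [Module ℂ B]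
  [AddCommGroup C] [Module ℂ C]

theorem HasRankLE.finrank_add_finrank_le {f : A → B → C} {r : ℕ} (hf : HasRankLE f r)
    (R : Submodule ℂ A) (hR : ∀ a ∈ R, (∀ b, f a b = 0) → a = 0)
    (hB : ∀ b, (∀ a, ∃ a' ∈ R, f a b = f a' b) → b = 0) :
    finrank ℂ R + finrank ℂ B ≤ r := by
  obtain ⟨α, β, c, hf⟩ := hf
  have hsep : ∀ a : R, (∀ i, (α i).domRestrict R a = 0) → a = 0 := fun a ha =>
    Subtype.ext <| hR a a.2 fun b => by simp [hf, show ∀ i, α i a = 0 from ha]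
  obtain ⟨I, hI⟩ := Dual.exists_finset_pi_bijective _ hsep
  have hRI : finrank ℂ R = I.card := by
    rw [(LinearEquiv.ofBijective _ hI).finrank_eq, finrank_fintype_fun_eq_card, Fintype.card_coe]
  have hβ : Function.Injective (LinearMap.pi fun i : {i // i ∉ I} => β i) := by
    rw [← LinearMap.ker_eq_bot, Submodule.eq_bot_iff]
    intro b hb
    refine hB b fun a => ?_
    obtain ⟨a', ha'⟩ := hI.2 fun i => α i a
    refine ⟨a', a'.2, ?_⟩
    rw [hf, hf]
    refine Finset.sum_congr rfl fun i _ => ?_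
    by_cases hi : i ∈ I
    · rw [← congrFun ha' ⟨i, hi⟩]
      rfl
    · rw [show β i b = 0 from congrFun (LinearMap.mem_ker.mp hb) ⟨i, hi⟩, mul_zero, mul_zero]
  have hB_le := LinearMap.finrank_le_finrank_of_injective hβ
  rw [finrank_fintype_fun_eq_card, Fintype.card_subtype_compl, Fintype.card_coe,
    Fintype.card_fin] at hB_le
  have hI_le : I.card ≤ r := by simpa using I.card_le_univ
  omega

end BilinearRank

namespace Matrix

variable {n : Type*}

def zeroRowSubmodule (K : Type*) [Semiring K] (z : n) : Submodule K (Matrix n n K) :=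
  LinearMap.ker (LinearMap.proj z ∘ₗ (ofLinearEquiv K).symm.toLinearMap)

section Semiring

variable {K : Type*} [Semiring K] {z : n}

theorem mem_zeroRowSubmodule {X : Matrix n n K} : X ∈ zeroRowSubmodule K z ↔ X z = 0 :=
  Iff.rfl

variable [Fintype n]

theorem mul_mem_zeroRowSubmodule {X : Matrix n n K} (hX : X ∈ zeroRowSubmodule K z)
    (Y : Matrix n n K) : X * Y ∈ zeroRowSubmodule K z := by
  rw [mem_zeroRowSubmodule] at hX ⊢
  funext j
  simp [mul_apply, hX]

theorem eq_zero_of_forall_mul_mem_zeroRowSubmodule [DecidableEq n] {Y : Matrix n n K}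
    (hY : ∀ X, X * Y ∈ zeroRowSubmodule K z) : Y = 0 := by
  ext k j
  simpa using congrFun (mem_zeroRowSubmodule.mp (hY (single z k 1))) j

end Semiring

theorem finrank_zeroRowSubmodule_add {K : Type*} [Field K] [Fintype n] (z : n) :
    finrank K (zeroRowSubmodule K z) + Fintype.card n = Fintype.card n * Fintype.card n := by
  let row : Matrix n n K →ₗ[K] n → K := LinearMap.proj z ∘ₗ (ofLinearEquiv K).symm.toLinearMap
  have hrow : LinearMap.range row = ⊤ :=
    LinearMap.range_eq_top.mpr fun w => ⟨of fun _ => w, rfl⟩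
  have := row.finrank_range_add_finrank_ker
  rw [hrow, finrank_top, finrank_fintype_fun_eq_card, finrank_matrix, finrank_self,
    mul_one] at this
  rw [← this, add_comm]
  rfl

end Matrix

/-- The rank of `m×m` matrix multiplication over ℂ is at least `2m² − m`. -/
theorem rank_matMul_lower_bound (m : ℕ) (hm : 1 ≤ m) (r : ℕ)
    (h : HasRankLE (fun (X Y : Matrix (Fin m) (Fin m) ℂ) => X * Y) r) :
    2 * m ^ 2 ≤ r + m := by
  set z : Fin m := ⟨0, hm⟩
  have hdim := Matrix.finrank_zeroRowSubmodule_add (K := ℂ) z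
  have hbound := h.finrank_add_finrank_le (Matrix.zeroRowSubmodule ℂ z)
    (fun X _ hX => by simpa using hX 1)
    fun Y hY => Matrix.eq_zero_of_forall_mul_mem_zeroRowSubmodule fun X => by
      obtain ⟨X', hX', hXY⟩ := hY X
      exact hXY ▸ Matrix.mul_mem_zeroRowSubmodule hX' Y
  simp only [finrank_matrix, finrank_self, mul_one, Fintype.card_fin] at hbound hdim
  nlinarith
end

section
/- For any bilinear map f : A × B → C between finite-dimensional complex vector spaces, the multiplicative complexity MC(f) and the rank R(f) satisfy MC(f) ≤ R(f) ≤ 2·MC(f). -/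
open scoped BigOperators

/-- The rank of a bilinear map: the least length of a bilinear computation. -/
noncomputable def bilinRank {A B C : Type*} [AddCommGroup A] [Module ℂ A] [AddCommGroup B]
    [Module ℂ B] [AddCommGroup C] [Module ℂ C] (f : A → B → C) : ℕ :=
  sInf {r | HasRankLE f r}

/-- A bilinear map `f : A × B → C` has multiplicative complexity at most `r` if there are
linear functionals `λᵢ, μᵢ` on `A ⊕ B` and vectors `cᵢ ∈ C` with
`f a b = ∑ᵢ λᵢ(a,b) μᵢ(a,b) cᵢ`. -/
def HasMCLE {A B C : Type*} [AddCommGroup A] [Module ℂ A] [AddCommGroup B] [Module ℂ B]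
    [AddCommGroup C] [Module ℂ C] (f : A → B → C) (r : ℕ) : Prop :=
  ∃ (lam mu : Fin r → (A × B →ₗ[ℂ] ℂ)) (c : Fin r → C),
    ∀ a b, f a b = ∑ i, (lam i (a, b) * mu i (a, b)) • c i

/-- The multiplicative complexity of a bilinear map. -/
noncomputable def mulComplexity {A B C : Type*} [AddCommGroup A] [Module ℂ A] [AddCommGroup B]
    [Module ℂ B] [AddCommGroup C] [Module ℂ C] (f : A → B → C) : ℕ :=
  sInf {r | HasMCLE f r}

/-!
A bilinear computation `∑ αᵢ(a) βᵢ(b) cᵢ` is in particular a quadratic one, so `MC(f) ≤ R(f)`.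
Conversely, in a quadratic computation `f a b = ∑ λᵢ(a, b) μᵢ(a, b) cᵢ` split every functional
as `ℓ(a, b) = ℓ(a, 0) + ℓ(0, b)`. After expanding, the terms `λᵢ(a, 0) μᵢ(a, 0) cᵢ` sum to
`f a 0 = 0` and the terms `λᵢ(0, b) μᵢ(0, b) cᵢ` to `f 0 b = 0`, leaving
`f a b = ∑ (λᵢ(a, 0) μᵢ(0, b) + μᵢ(a, 0) λᵢ(0, b)) cᵢ`, a bilinear computation of length `2r`.
-/

theorem LinearMap.apply_eq_sum_repr_mul_repr_smul {R M N P ι κ : Type*} [CommSemiring R]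
    [AddCommMonoid M] [Module R M] [AddCommMonoid N] [Module R N] [AddCommMonoid P] [Module R P]
    [Fintype ι] [Fintype κ] (bM : Module.Basis ι R M) (bN : Module.Basis κ R N)
    (f : M →ₗ[R] N →ₗ[R] P) (x : M) (y : N) :
    f x y = ∑ p : ι × κ, (bM.repr x p.1 * bN.repr y p.2) • f (bM p.1) (bN p.2) := by
  conv_lhs => rw [← bM.sum_repr x, ← bN.sum_repr y]
  simp only [map_sum, map_smul, LinearMap.sum_apply, LinearMap.smul_apply, Fintype.sum_prod_type,
    mul_smul, Finset.smul_sum, smul_comm (bN.repr y _)]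
  exact Finset.sum_comm

section Rank

variable {A B C : Type*} [AddCommGroup A] [Module ℂ A] [AddCommGroup B] [Module ℂ B]
  [AddCommGroup C] [Module ℂ C] {f : A → B → C} {r : ℕ}

theorem HasRankLE.bilinRank_le (h : HasRankLE f r) : bilinRank f ≤ r :=
  Nat.sInf_le h

theorem HasRankLE.hasRankLE_bilinRank (h : HasRankLE f r) : HasRankLE f (bilinRank f) :=
  Nat.sInf_mem (s := {n | HasRankLE f n}) ⟨r, h⟩

theorem HasMCLE.mulComplexity_le (h : HasMCLE f r) : mulComplexity f ≤ r :=
  Nat.sInf_le h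

theorem HasMCLE.hasMCLE_mulComplexity (h : HasMCLE f r) : HasMCLE f (mulComplexity f) :=
  Nat.sInf_mem (s := {n | HasMCLE f n}) ⟨r, h⟩

theorem HasRankLE.hasMCLE (h : HasRankLE f r) : HasMCLE f r := by
  obtain ⟨α, β, c, h⟩ := h
  exact ⟨fun i => (α i).comp (.fst ℂ A B), fun i => (β i).comp (.snd ℂ A B), c,
    fun a b => by simpa using h a b⟩

theorem hasRankLE_card_of_eq_sum {ι : Type*} [Fintype ι]
    (α : ι → A →ₗ[ℂ] ℂ) (β : ι → B →ₗ[ℂ] ℂ) (c : ι → C)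
    (h : ∀ a b, f a b = ∑ i, (α i a * β i b) • c i) : HasRankLE f (Fintype.card ι) := by
  let e := (Fintype.equivFin ι).symm
  exact ⟨α ∘ e, β ∘ e, c ∘ e, fun a b => by rw [h, ← e.sum_comp]; rfl⟩

theorem hasRankLE_finrank_mul [FiniteDimensional ℂ A] [FiniteDimensional ℂ B]
    (f : A →ₗ[ℂ] B →ₗ[ℂ] C) :
    HasRankLE (fun a b => f a b) (Module.finrank ℂ A * Module.finrank ℂ B) := by
  let bA := Module.finBasis ℂ A
  let bB := Module.finBasis ℂ B
  have h := hasRankLE_card_of_eq_sum (f := fun a b => f a b)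
    (fun p : Fin (Module.finrank ℂ A) × Fin (Module.finrank ℂ B) => bA.coord p.1)
    (fun p => bB.coord p.2) (fun p => f (bA p.1) (bB p.2))
    (f.apply_eq_sum_repr_mul_repr_smul bA bB)
  rwa [Fintype.card_prod, Fintype.card_fin, Fintype.card_fin] at h

theorem HasMCLE.hasRankLE_two_mul {f : A →ₗ[ℂ] B →ₗ[ℂ] C}
    (h : HasMCLE (fun a b => f a b) r) : HasRankLE (fun a b => f a b) (2 * r) := by
  obtain ⟨lam, mu, c, h⟩ := h
  have split (ℓ : A × B →ₗ[ℂ] ℂ) (a : A) (b : B) : ℓ (a, b) = ℓ (a, 0) + ℓ (0, b) := by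
    rw [← map_add, Prod.mk_add_mk, add_zero, zero_add]
  have expand (a : A) (b : B) : f a b =
      ∑ i, (lam i (a, 0) * mu i (a, 0)) • c i + ∑ i, (lam i (0, b) * mu i (0, b)) • c i +
      (∑ i, (lam i (a, 0) * mu i (0, b)) • c i + ∑ i, (mu i (a, 0) * lam i (0, b)) • c i) := by
    simp only [h a b, split (lam _) a b, split (mu _) a b, ← Finset.sum_add_distrib, ← add_smul]
    exact Finset.sum_congr rfl fun i _ => by ring_nf
  have diag_left (a : A) : ∑ i, (lam i (a, 0) * mu i (a, 0)) • c i = 0 := by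
    simpa using (h a 0).symm
  have diag_right (b : B) : ∑ i, (lam i (0, b) * mu i (0, b)) • c i = 0 := by
    simpa using (h 0 b).symm
  rw [two_mul, ← Fintype.card_fin r, ← Fintype.card_sum]
  refine hasRankLE_card_of_eq_sum
    (Sum.elim (fun i => (lam i).comp (.inl ℂ A B)) fun i => (mu i).comp (.inl ℂ A B))
    (Sum.elim (fun i => (mu i).comp (.inr ℂ A B)) fun i => (lam i).comp (.inr ℂ A B))
    (Sum.elim c c) fun a b => ?_
  rw [expand, diag_left, diag_right, zero_add, zero_add, Fintype.sum_sum_type]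
  rfl

end Rank

theorem mulComplexity_le_rank_le_two_mul_general {A B C : Type*}
    [AddCommGroup A] [Module ℂ A] [FiniteDimensional ℂ A]
    [AddCommGroup B] [Module ℂ B] [FiniteDimensional ℂ B]
    [AddCommGroup C] [Module ℂ C]
    (f : A →ₗ[ℂ] B →ₗ[ℂ] C) :
    mulComplexity (fun a b => f a b) ≤ bilinRank (fun a b => f a b) ∧
    bilinRank (fun a b => f a b) ≤ 2 * mulComplexity (fun a b => f a b) := by
  have hR := (hasRankLE_finrank_mul f).hasRankLE_bilinRank
  have hM := hR.hasMCLE.hasMCLE_mulComplexity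
  exact ⟨hR.hasMCLE.mulComplexity_le, hM.hasRankLE_two_mul.bilinRank_le⟩

/-- For any bilinear map between finite-dimensional complex vector spaces,
`MC(f) ≤ R(f) ≤ 2·MC(f)`. -/
theorem mulComplexity_le_rank_le_two_mul {A B C : Type*}
    [AddCommGroup A] [Module ℂ A] [FiniteDimensional ℂ A]
    [AddCommGroup B] [Module ℂ B] [FiniteDimensional ℂ B]
    [AddCommGroup C] [Module ℂ C] [FiniteDimensional ℂ C]
    (f : A →ₗ[ℂ] B →ₗ[ℂ] C) :
    mulComplexity (fun a b => f a b) ≤ bilinRank (fun a b => f a b) ∧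
    bilinRank (fun a b => f a b) ≤ 2 * mulComplexity (fun a b => f a b) :=
  mulComplexity_le_rank_le_two_mul_general f
end

section
/- (Waksman) The multiplicative complexity of the 2×2 by 2×3 matrix multiplication map over ℂ is at most 10: there exist linear functionals λ_1,…,λ_{10} and μ_1,…,μ_{10} on Matrix(2×2,ℂ) ⊕ Matrix(2×3,ℂ) and matrices c_1,…,c_{10} ∈ Matrix(2×3,ℂ) such that A·B = Σ_{i=1}^{10} λ_i(A,B) μ_i(A,B) c_i for all A ∈ Matrix(2×2,ℂ), B ∈ Matrix(2×3,ℂ). -/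
open scoped BigOperators

/-!
Waksman's algorithm rests on the commutative identities
`(x + y)(z + w) - (x - y)(z - w) = 2(xw + yz)` and `(x + y)(z + w) + (x - y)(z - w) = 2(xz + yw)`.
With `x, z` the entries of a row `r` of `A` and `y, w` those of a column `j` of `B`, the products
`P(r, ±1, j) = (A r 0 ± B 1 j)(A r 1 ± B 0 j)` give `2 (A B) r j` as their difference, while their
sum is `2 (A r 0 A r 1 + B 1 j B 0 j)`. Across the two rows these sums differ by
`2 (A 0 0 A 0 1 - A 1 0 A 1 1)`, which does not depend on `j`: it is read off from the four
products of one column `j₀`, and every other column then needs only `P(0, ±1, j)` and `P(1, 1, j)`.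
For `B` with `p` columns this uses `3 p + 1` products.
-/

theorem HasMCLE.of_fintype {A B C ι : Type*} [AddCommGroup A] [Module ℂ A] [AddCommGroup B]
    [Module ℂ B] [AddCommGroup C] [Module ℂ C] [Fintype ι] {f : A → B → C}
    (lam mu : ι → A × B →ₗ[ℂ] ℂ) (c : ι → C)
    (h : ∀ a b, f a b = ∑ i, (lam i (a, b) * mu i (a, b)) • c i) :
    HasMCLE f (Fintype.card ι) := by
  let e := Fintype.equivFin ι
  refine ⟨lam ∘ e.symm, mu ∘ e.symm, c ∘ e.symm, fun a b => ?_⟩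
  rw [h, ← e.symm.sum_comp]
  rfl

open Matrix

section CommProduct

variable {R κ : Type*} [CommRing R] (A : Matrix (Fin 2) (Fin 2) R) (B : Matrix (Fin 2) κ R)

def commProduct : Fin 2 × R × κ → R
  | (r, s, j) => (A r 0 + s * B 1 j) * (A r 1 + s * B 0 j)

theorem two_mul_mul_apply (r : Fin 2) (j : κ) :
    2 * (A * B) r j = commProduct A B (r, 1, j) - commProduct A B (r, -1, j) := by
  simp only [commProduct, mul_apply, Fin.sum_univ_two]
  ring

theorem commProduct_one_add_commProduct_neg_one (r : Fin 2) (j : κ) :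
    commProduct A B (r, 1, j) + commProduct A B (r, -1, j) =
      2 * (A r 0 * A r 1 + B 1 j * B 0 j) := by
  simp only [commProduct]
  ring

theorem two_mul_mul_apply_one (j₀ k : κ) :
    2 * (A * B) 1 k =
      2 * commProduct A B (1, 1, k) - (commProduct A B (0, 1, k) + commProduct A B (0, -1, k)) +
        (commProduct A B (0, 1, j₀) + commProduct A B (0, -1, j₀) -
          commProduct A B (1, 1, j₀) - commProduct A B (1, -1, j₀)) := by
  linear_combination two_mul_mul_apply A B 1 k
    - commProduct_one_add_commProduct_neg_one A B 1 k
    + commProduct_one_add_commProduct_neg_one A B 0 k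
    - commProduct_one_add_commProduct_neg_one A B 0 j₀
    + commProduct_one_add_commProduct_neg_one A B 1 j₀

end CommProduct

section Waksman

variable {κ : Type*}

def commFactorLeft : Fin 2 × ℂ × κ → Matrix (Fin 2) (Fin 2) ℂ × Matrix (Fin 2) κ ℂ →ₗ[ℂ] ℂ
  | (r, s, j) => entryLinearMap ℂ ℂ r 0 ∘ₗ LinearMap.fst ℂ _ _ +
      s • (entryLinearMap ℂ ℂ 1 j ∘ₗ LinearMap.snd ℂ _ _)

def commFactorRight : Fin 2 × ℂ × κ → Matrix (Fin 2) (Fin 2) ℂ × Matrix (Fin 2) κ ℂ →ₗ[ℂ] ℂ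
  | (r, s, j) => entryLinearMap ℂ ℂ r 1 ∘ₗ LinearMap.fst ℂ _ _ +
      s • (entryLinearMap ℂ ℂ 0 j ∘ₗ LinearMap.snd ℂ _ _)

theorem commFactorLeft_mul_commFactorRight (t : Fin 2 × ℂ × κ)
    (A : Matrix (Fin 2) (Fin 2) ℂ) (B : Matrix (Fin 2) κ ℂ) :
    commFactorLeft t (A, B) * commFactorRight t (A, B) = commProduct A B t := by
  obtain ⟨r, s, j⟩ := t
  simp [commFactorLeft, commFactorRight, commProduct]

variable (j₀ : κ)

def waksmanIndex : Option (Fin 3 × κ) → Fin 2 × ℂ × κ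
  | none => (1, -1, j₀)
  | some (0, j) => (0, 1, j)
  | some (1, j) => (0, -1, j)
  | some (2, j) => (1, 1, j)

variable [DecidableEq κ]

-- Row 0 is read off from `two_mul_mul_apply`, row 1 from `two_mul_mul_apply_one`.
noncomputable def waksmanCoeff : Option (Fin 3 × κ) → Matrix (Fin 2) κ ℂ
  | none => of ![0, Function.const κ (-1 / 2)]
  | some (0, j) =>
      of ![Pi.single j (1 / 2), Pi.single j (-1 / 2) + Function.const κ (if j = j₀ then 1 / 2 else 0)]
  | some (1, j) =>
      of ![Pi.single j (-1 / 2), Pi.single j (-1 / 2) + Function.const κ (if j = j₀ then 1 / 2 else 0)]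
  | some (2, j) => of ![0, Pi.single j 1 - Function.const κ (if j = j₀ then 1 / 2 else 0)]

theorem mul_eq_sum_waksman [Fintype κ] (A : Matrix (Fin 2) (Fin 2) ℂ) (B : Matrix (Fin 2) κ ℂ) :
    A * B = ∑ o, commProduct A B (waksmanIndex j₀ o) • waksmanCoeff j₀ o := by
  ext i k
  fin_cases i <;>
    simp only [Matrix.sum_apply, Matrix.smul_apply, Fintype.sum_option, Fintype.sum_prod_type,
      Fin.sum_univ_three, waksmanIndex, waksmanCoeff, Fin.zero_eta, Fin.mk_one, of_apply, cons_val_zero,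
      cons_val_one, Pi.add_apply, Pi.sub_apply, Pi.zero_apply, Function.const_apply, Pi.single_apply,
      smul_eq_mul, mul_add, mul_sub, mul_ite, mul_zero, mul_one, Finset.sum_add_distrib,
      Finset.sum_sub_distrib, Finset.sum_ite_eq, Finset.sum_ite_eq', Finset.sum_const_zero,
      Finset.mem_univ, if_true, add_zero, zero_add]
  · linear_combination (1 / 2 : ℂ) * two_mul_mul_apply A B 0 k
  · linear_combination (1 / 2 : ℂ) * two_mul_mul_apply_one A B j₀ k

end Waksman

theorem hasMCLE_fin_two_mul {κ : Type*} [Fintype κ] [Nonempty κ] :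
    HasMCLE (fun (A : Matrix (Fin 2) (Fin 2) ℂ) (B : Matrix (Fin 2) κ ℂ) => A * B)
      (3 * Fintype.card κ + 1) := by
  classical
  let j₀ : κ := Classical.arbitrary κ
  have h : HasMCLE (fun (A : Matrix (Fin 2) (Fin 2) ℂ) (B : Matrix (Fin 2) κ ℂ) => A * B)
      (Fintype.card (Option (Fin 3 × κ))) :=
    HasMCLE.of_fintype (fun o => commFactorLeft (waksmanIndex j₀ o))
      (fun o => commFactorRight (waksmanIndex j₀ o)) (waksmanCoeff j₀) fun A B => by
        simpa only [commFactorLeft_mul_commFactorRight] using mul_eq_sum_waksman j₀ A B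
  rwa [Fintype.card_option, Fintype.card_prod, Fintype.card_fin] at h

/-- Waksman: the multiplicative complexity of 2×2 by 2×3 matrix multiplication over ℂ
is at most 10. -/
theorem waksman_mulComplexity_le_ten :
    HasMCLE (fun (A : Matrix (Fin 2) (Fin 2) ℂ) (B : Matrix (Fin 2) (Fin 3) ℂ) => A * B) 10 :=
  hasMCLE_fin_two_mul
end

section
/- Let V be a finite-dimensional complex vector space, let d ≥ 1, and let S ⊆ V be a subset that is closed under scalar multiplication and whose linear span is all of V. If P : V → ℂ is a homogeneous polynomial function of degree d (equivalently, P is given by a homogeneous multivariate polynomial of degree d in the coordinates with respect to some basis of V) that vanishes on every sum x_1 + ⋯ + x_d with x_1,…,x_d ∈ S, then P = 0. (This is the statement that I_d(σ_d(X)) = 0 for a variety X ⊂ ℙV* not contained in a linear subspace.) -/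
/-!
Write `v = ∑ cᵢ gᵢ` with `gᵢ ∈ S` and pull `p` back to the degree-`d` form
`q(y) = p(∑ yᵢ gᵢ)`. Whenever at most `d` of the `yᵢ` are nonzero, `∑ yᵢ gᵢ` is a sum of `d`
elements of `S` (pad with `0 = 0 • s`), so `q(y) = 0`. A monomial of degree `d` involves at most
`d` variables, and killing all the other variables preserves its coefficient while leaving a
polynomial that vanishes everywhere; hence `q = 0` and `p(v) = q(c) = 0`.
-/

open scoped BigOperators

open Finset

namespace MvPolynomial

section Restriction

variable {R σ : Type*} [CommSemiring R]

theorem eval_aeval (x : σ → R) {τ : Type*} (g : τ → MvPolynomial σ R) (p : MvPolynomial τ R) :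
    eval x (aeval g p) = eval (fun j => eval x (g j)) p := by
  rw [aeval_eq_bind₁]
  exact eval₂Hom_bind₁ (RingHom.id R) x g p

variable [DecidableEq σ] (T : Finset σ)

theorem aeval_ite_mem_X_monomial (α : σ →₀ ℕ) (c : R) :
    aeval (fun i => if i ∈ T then X i else 0) (monomial α c) =
      if α.support ⊆ T then monomial α c else 0 := by
  rw [aeval_monomial, algebraMap_eq, Finsupp.prod]
  split_ifs with hα
  · rw [monomial_eq, Finsupp.prod]
    congr 1
    exact prod_congr rfl fun i hi => by rw [if_pos (hα hi)]
  · obtain ⟨i, hi, hiT⟩ := not_subset.mp hα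
    rw [prod_eq_zero hi (by rw [if_neg hiT, zero_pow (Finsupp.mem_support_iff.mp hi)]), mul_zero]

theorem coeff_aeval_ite_mem_X {α : σ →₀ ℕ} (hα : α.support ⊆ T) (q : MvPolynomial σ R) :
    coeff α (aeval (fun i => if i ∈ T then X i else 0) q) = coeff α q := by
  induction q using induction_on' with
  | monomial β c =>
    rw [aeval_ite_mem_X_monomial]
    split_ifs with hβ
    · rfl
    · rw [coeff_zero, coeff_monomial, if_neg]
      rintro rfl
      exact hβ hα
  | add q₁ q₂ h₁ h₂ => rw [map_add, coeff_add, coeff_add, h₁, h₂]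

end Restriction

theorem IsHomogeneous.eq_zero_of_forall_eval_eq_zero_of_card_le {R σ : Type*} [CommRing R]
    [IsDomain R] [Infinite R] {q : MvPolynomial σ R} {d : ℕ} (hq : q.IsHomogeneous d)
    (h : ∀ T : Finset σ, #T ≤ d → ∀ x : σ → R, (∀ i ∉ T, x i = 0) → eval x q = 0) :
    q = 0 := by
  classical
  ext α
  by_cases hα : coeff α q = 0
  · rw [hα, coeff_zero]
  have hcard : #α.support ≤ d := by
    simpa [hq.degree_eq_sum_deg_support (mem_support_iff.mpr hα)] using
      card_nsmul_le_sum α.support α 1 fun i hi =>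
        Nat.one_le_iff_ne_zero.mpr (Finsupp.mem_support_iff.mp hi)
  have hres : MvPolynomial.aeval
      (fun i => if i ∈ α.support then (X i : MvPolynomial σ R) else 0) q = 0 := by
    refine MvPolynomial.funext fun x => ?_
    rw [eval_aeval, map_zero]
    refine h _ hcard _ fun i hi => ?_
    simp [hi]
  rw [← coeff_aeval_ite_mem_X _ subset_rfl, hres]

theorem IsHomogeneous.exists_isHomogeneous_eval_eq_eval_linearMap {R σ τ : Type*}
    [CommSemiring R] [Fintype σ] [DecidableEq σ] {p : MvPolynomial τ R} {d : ℕ}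
    (hp : p.IsHomogeneous d) (f : (σ → R) →ₗ[R] τ → R) :
    ∃ q : MvPolynomial σ R, q.IsHomogeneous d ∧ ∀ x, eval x q = eval (f x) p := by
  let g : τ → MvPolynomial σ R := fun j => ∑ i, C (f (Pi.single i 1) j) * X i
  refine ⟨MvPolynomial.aeval g p, ?_, fun x => ?_⟩
  · simpa using hp.aeval g fun j => IsHomogeneous.sum _ _ _ fun i _ => isHomogeneous_C_mul_X _ _
  · rw [eval_aeval]
    congr
    funext j
    conv_rhs => rw [pi_eq_sum_univ' x]
    simp [g, mul_comm]

end MvPolynomial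

theorem Finset.exists_fin_sum_eq_sum_of_card_le {ι V : Type*} [AddCommMonoid V] {S : Set V}
    (h0 : 0 ∈ S) {f : ι → V} {T : Finset ι} (hf : ∀ i ∈ T, f i ∈ S) {d : ℕ} (hT : #T ≤ d) :
    ∃ x : Fin d → V, (∀ k, x k ∈ S) ∧ ∑ k, x k = ∑ i ∈ T, f i := by
  classical
  induction T using Finset.induction_on generalizing d with
  | empty => exact ⟨0, fun _ => h0, by simp⟩
  | insert a T ha ih =>
    rw [card_insert_of_notMem ha] at hT
    obtain ⟨d, rfl⟩ := Nat.exists_eq_add_one_of_ne_zero (by omega : d ≠ 0)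
    obtain ⟨x, hxS, hx⟩ := ih (d := d) (fun i hi => hf i (mem_insert_of_mem hi)) (by omega)
    refine ⟨Fin.cons (f a) x, Fin.cases (hf a (mem_insert_self a T)) hxS, ?_⟩
    rw [Fin.sum_univ_succ, sum_insert ha, Fin.cons_zero]
    simp only [Fin.cons_succ, hx]

/-- If `S ⊆ V` is closed under scalar multiplication and spans the finite-dimensional
complex vector space `V` (with basis `b`), and a homogeneous degree-`d` polynomial
function `P` (given by a homogeneous `MvPolynomial` in the coordinates with respect to
`b`) vanishes on every sum of `d` elements of `S`, then `P` is identically zero.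
This is the statement that `I_d(σ_d(X)) = 0` for a variety `X` not contained in a
hyperplane. -/
theorem homogeneous_vanishing_on_secant_sums {V : Type*} [AddCommGroup V] [Module ℂ V]
    {n : ℕ} (b : Module.Basis (Fin n) ℂ V) (d : ℕ) (hd : 1 ≤ d)
    (S : Set V) (hS : ∀ (lam : ℂ), ∀ x ∈ S, lam • x ∈ S)
    (hspan : Submodule.span ℂ S = ⊤)
    (p : MvPolynomial (Fin n) ℂ) (hp : p.IsHomogeneous d)
    (hvanish : ∀ x : Fin d → V, (∀ i, x i ∈ S) →
      MvPolynomial.eval (fun j => b.repr (∑ i, x i) j) p = 0) :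
    ∀ v : V, MvPolynomial.eval (fun j => b.repr v j) p = 0 := by
  intro v
  rcases S.eq_empty_or_nonempty with rfl | ⟨s, hs⟩
  · obtain rfl : v = 0 := by simpa using (hspan ▸ Submodule.mem_top : v ∈ Submodule.span ℂ ∅)
    simp [MvPolynomial.eval_zero', MvPolynomial.constantCoeff_eq,
      hp.coeff_eq_zero (d := 0) (by simp; omega)]
  obtain ⟨m, c, g, rfl⟩ := Submodule.mem_span_set'.mp (hspan ▸ Submodule.mem_top : v ∈ _)
  let L := Fintype.linearCombination ℂ fun i => (g i : V)
  obtain ⟨q, hq, hqp⟩ :=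
    hp.exists_isHomogeneous_eval_eq_eval_linearMap (b.equivFun.toLinearMap ∘ₗ L)
  have hq0 : q = 0 := hq.eq_zero_of_forall_eval_eq_zero_of_card_le fun T hT y hy => by
    obtain ⟨x, hxS, hx⟩ := exists_fin_sum_eq_sum_of_card_le (by simpa using hS 0 s hs)
      (fun i _ => hS (y i) _ (g i).2) hT
    have hLy : L y = ∑ i ∈ T, y i • (g i : V) := by
      rw [Fintype.linearCombination_apply,
        ← sum_subset (subset_univ T) fun i _ hi => by rw [hy i hi, zero_smul]]
    rw [hqp, ← hvanish x hxS, hx, ← hLy]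
    rfl
  exact (hqp c).symm.trans (by rw [hq0, map_zero])
end
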